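/- arXiv:2401.14593 — 4 statements merged into one kernel-verified Lean document; each statement's English description precedes it below -/
import Mathlib

section
/- With the group boundaries, truncation points, indices, and constants as in the context, let 0 = q_0 ≤ q_1 ≤ ... ≤ q_m be real numbers (the values of a distribution function at the boundaries), let f be the histogram density defined by f(x) = (q_j - q_{j-1})/(c_j - c_{j-1}) for c_{j-1} < x ≤ c_j (1 ≤ j ≤ m), and let L be the ogive, i.e., the piecewise linear interpolant with L(c_j) = q_j for 0 ≤ j ≤ m. If L(T) - L(t) ≠ 0, then the truncated first moment satisfies (∫_t^T x f(x) dx) / (L(T) - L(t)) = [u_l (q_l - q_{l-1}) + Σ_{i=l+1}^{r} v_i (q_i - q_{i-1}) + z_r (q_{r+1} - q_r)] / [A_2 q_r + B_2 q_{r+1} - A_1 q_{l-1} - B_1 q_l]. -/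
/-!
The histogram density is a step function, so `x f(x)` integrates exactly on each group: where `f`
equals the slope `s` on `(a, b]`, the integral is `s (b² - a²) / 2`. Splitting `[t, T]` at
`c_l, …, c_r` gives the numerator, each full group contributing `v_i (q_i - q_{i-1})` because
`(c_i² - c_{i-1}²) / (c_i - c_{i-1}) = c_i + c_{i-1}`; the denominator is `L(T) - L(t)` read off
the linear formula of the ogive on the two end groups.
-/

open MeasureTheory Set Interval

section StepFunction

variable {f : ℝ → ℝ}

theorem intervalIntegrable_id_mul_of_eqOn_uIoc {a b s : ℝ} (h : EqOn f (fun _ => s) (Ι a b)) :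
    IntervalIntegrable (fun x => x * f x) volume a b :=
  (intervalIntegrable_congr (g := fun x => x * s) fun x hx => by simp only [h hx]).mpr
    ((continuous_mul_const s).intervalIntegrable a b)

theorem integral_id_mul_of_eqOn_uIoc {a b s : ℝ} (h : EqOn f (fun _ => s) (Ι a b)) :
    ∫ x in a..b, x * f x = s * (b ^ 2 - a ^ 2) / 2 := by
  rw [intervalIntegral.integral_congr_ae (g := fun x => x * s)
      (Filter.Eventually.of_forall fun x hx => by simp only [h hx]),
    intervalIntegral.integral_mul_const, integral_id]
  ring

theorem integral_id_mul_eq_sum_of_eqOn_uIoc {c s : ℕ → ℝ} {l r : ℕ} (hlr : l ≤ r)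
    (h : ∀ i ∈ Finset.Icc (l + 1) r, EqOn f (fun _ => s i) (Ι (c (i - 1)) (c i))) :
    IntervalIntegrable (fun x => x * f x) volume (c l) (c r) ∧
      ∫ x in c l..c r, x * f x =
        ∑ i ∈ Finset.Icc (l + 1) r, s i * (c i ^ 2 - c (i - 1) ^ 2) / 2 := by
  have h' : ∀ k ∈ Ico l r, EqOn f (fun _ => s (k + 1)) (Ι (c k) (c (k + 1))) :=
    fun k hk => by simpa using h (k + 1) (by simp only [mem_Ico, Finset.mem_Icc] at hk ⊢; omega)
  refine ⟨IntervalIntegrable.trans_iterate_Ico hlr fun k hk =>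
    intervalIntegrable_id_mul_of_eqOn_uIoc (h' k hk), ?_⟩
  rw [← intervalIntegral.sum_integral_adjacent_intervals_Ico hlr fun k hk =>
      intervalIntegrable_id_mul_of_eqOn_uIoc (h' k hk),
    ← Finset.Ico_add_one_right_eq_Icc, ← Finset.sum_Ico_add']
  exact Finset.sum_congr rfl fun k hk => by
    rw [integral_id_mul_of_eqOn_uIoc (h' k (Finset.mem_Ico.mp hk)), Nat.add_sub_cancel]

theorem integral_id_mul_of_eqOn_pieces {c s : ℕ → ℝ} {l r : ℕ} {t T : ℝ} (hlr : l ≤ r)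
    (hleft : EqOn f (fun _ => s l) (Ι t (c l)))
    (hmid : ∀ i ∈ Finset.Icc (l + 1) r, EqOn f (fun _ => s i) (Ι (c (i - 1)) (c i)))
    (hright : EqOn f (fun _ => s (r + 1)) (Ι (c r) T)) :
    ∫ x in t..T, x * f x = s l * (c l ^ 2 - t ^ 2) / 2
      + ∑ i ∈ Finset.Icc (l + 1) r, s i * (c i ^ 2 - c (i - 1) ^ 2) / 2
      + s (r + 1) * (T ^ 2 - c r ^ 2) / 2 := by
  obtain ⟨hmidInt, hmidVal⟩ := integral_id_mul_eq_sum_of_eqOn_uIoc hlr hmid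
  have hleftInt := intervalIntegrable_id_mul_of_eqOn_uIoc hleft
  have hrightInt := intervalIntegrable_id_mul_of_eqOn_uIoc hright
  rw [← intervalIntegral.integral_add_adjacent_intervals hleftInt (hmidInt.trans hrightInt),
    ← intervalIntegral.integral_add_adjacent_intervals hmidInt hrightInt, hmidVal,
    integral_id_mul_of_eqOn_uIoc hleft, integral_id_mul_of_eqOn_uIoc hright, add_assoc]

end StepFunction

theorem eqOn_uIoc_of_histogram {m : ℕ} {c q : ℕ → ℝ} {f : ℝ → ℝ}
    (hf : ∀ j, 1 ≤ j → j ≤ m → ∀ x, c (j - 1) < x → x ≤ c j →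
      f x = (q j - q (j - 1)) / (c j - c (j - 1)))
    {j : ℕ} (hj : 1 ≤ j) (hjm : j ≤ m) {a b : ℝ} (ha : c (j - 1) ≤ a) (hab : a ≤ b)
    (hb : b ≤ c j) :
    EqOn f (fun _ => (q j - q (j - 1)) / (c j - c (j - 1))) (Ι a b) := fun x hx => by
  rw [uIoc_of_le hab] at hx
  exact hf j hj hjm x (ha.trans_lt hx.1) (hx.2.trans hb)

theorem div_mul_sq_sub_sq_div_two {a b p p' : ℝ} (hab : a ≠ b) :
    (p - p') / (a - b) * (a ^ 2 - b ^ 2) / 2 = (a + b) / 2 * (p - p') := by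
  field_simp [sub_ne_zero.mpr hab]
  ring

theorem stmt2_general (m : ℕ) (c : ℕ → ℝ)
    (hcmono : ∀ j, j < m → c j < c (j + 1))
    (q : ℕ → ℝ)
    (l r : ℕ) (hl : 1 ≤ l) (hlr : l ≤ r) (hrm : r + 1 ≤ m)
    (t T : ℝ) (ht1 : c (l - 1) < t) (ht2 : t ≤ c l) (hT1 : c r < T) (hT2 : T ≤ c (r + 1))
    (A₁ B₁ A₂ B₂ uₗ z_r : ℝ) (v : ℕ → ℝ)
    (hA₁ : A₁ = (c l - t) / (c l - c (l - 1)))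
    (hB₁ : B₁ = (t - c (l - 1)) / (c l - c (l - 1)))
    (hA₂ : A₂ = (c (r + 1) - T) / (c (r + 1) - c r))
    (hB₂ : B₂ = (T - c r) / (c (r + 1) - c r))
    (huₗ : uₗ = (c l ^ 2 - t ^ 2) / (2 * (c l - c (l - 1))))
    (hv : ∀ i, v i = (c i + c (i - 1)) / 2)
    (hz : z_r = (T ^ 2 - c r ^ 2) / (2 * (c (r + 1) - c r)))
    -- the histogram density
    (f : ℝ → ℝ)
    (hf : ∀ j, 1 ≤ j → j ≤ m → ∀ x, c (j - 1) < x → x ≤ c j →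
      f x = (q j - q (j - 1)) / (c j - c (j - 1)))
    -- the ogive: linear interpolant of the points (c j, q j)
    (L : ℝ → ℝ)
    (hL : ∀ j, 1 ≤ j → j ≤ m → ∀ x, c (j - 1) ≤ x → x ≤ c j →
      L x = ((c j - x) * q (j - 1) + (x - c (j - 1)) * q j) / (c j - c (j - 1))) :
    (∫ x in t..T, x * f x) / (L T - L t)
      = (uₗ * (q l - q (l - 1)) + (∑ i ∈ Finset.Icc (l + 1) r, v i * (q i - q (i - 1)))
          + z_r * (q (r + 1) - q r))
        / (A₂ * q r + B₂ * q (r + 1) - A₁ * q (l - 1) - B₁ * q l) := by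
  have hc : ∀ j, 1 ≤ j → j ≤ m → c (j - 1) < c j := fun j hj hjm => by
    simpa [Nat.sub_add_cancel hj] using hcmono (j - 1) (by omega)
  have hleft := eqOn_uIoc_of_histogram hf hl (by omega) ht1.le ht2 le_rfl
  have hmid : ∀ i ∈ Finset.Icc (l + 1) r,
      EqOn f (fun _ => (q i - q (i - 1)) / (c i - c (i - 1))) (Ι (c (i - 1)) (c i)) :=
    fun i hi => by
      have hi := Finset.mem_Icc.mp hi
      exact eqOn_uIoc_of_histogram hf (by omega) (by omega) le_rfl
        (hc i (by omega) (by omega)).le le_rfl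
  have hright := eqOn_uIoc_of_histogram hf (j := r + 1) (by omega) hrm (by simp) hT1.le hT2
  have hsum : ∑ i ∈ Finset.Icc (l + 1) r,
      (q i - q (i - 1)) / (c i - c (i - 1)) * (c i ^ 2 - c (i - 1) ^ 2) / 2
      = ∑ i ∈ Finset.Icc (l + 1) r, v i * (q i - q (i - 1)) :=
    Finset.sum_congr rfl fun i hi => by
      have hi := Finset.mem_Icc.mp hi
      rw [div_mul_sq_sub_sq_div_two (hc i (by omega) (by omega)).ne', hv]
  have hden : L T - L t = A₂ * q r + B₂ * q (r + 1) - A₁ * q (l - 1) - B₁ * q l := by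
    rw [hL l hl (by omega) t ht1.le ht2, hL (r + 1) (by omega) hrm T (by simpa using hT1.le) hT2,
      hA₁, hB₁, hA₂, hB₂, Nat.add_sub_cancel]
    ring
  rw [integral_id_mul_of_eqOn_pieces hlr hleft hmid hright, hsum, hden, huₗ, hz,
    Nat.add_sub_cancel, mul_comm 2 (c l - _), mul_comm 2 (c (r + 1) - _), ← div_div, ← div_div]
  ring

/-- The sample truncated first moment of grouped data, computed from the histogram
density `f` and the ogive `L`, equals the explicit ratio
`[uₗ(qₗ - q_{l-1}) + Σ_{i=l+1}^r vᵢ(qᵢ - q_{i-1}) + z_r(q_{r+1} - q_r)] /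
 [A₂ q_r + B₂ q_{r+1} - A₁ q_{l-1} - B₁ qₗ]`. -/
theorem stmt2 (m : ℕ) (c : ℕ → ℝ) (hc0 : c 0 = 0)
    (hcmono : ∀ j, j < m → c j < c (j + 1))
    (q : ℕ → ℝ) (hq0 : q 0 = 0) (hqmono : ∀ j, j < m → q j ≤ q (j + 1))
    (l r : ℕ) (hl : 1 ≤ l) (hlr : l ≤ r) (hrm : r + 1 ≤ m)
    (t T : ℝ) (ht1 : c (l - 1) < t) (ht2 : t ≤ c l) (hT1 : c r < T) (hT2 : T ≤ c (r + 1))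
    (A₁ B₁ A₂ B₂ uₗ z_r : ℝ) (v : ℕ → ℝ)
    (hA₁ : A₁ = (c l - t) / (c l - c (l - 1)))
    (hB₁ : B₁ = (t - c (l - 1)) / (c l - c (l - 1)))
    (hA₂ : A₂ = (c (r + 1) - T) / (c (r + 1) - c r))
    (hB₂ : B₂ = (T - c r) / (c (r + 1) - c r))
    (huₗ : uₗ = (c l ^ 2 - t ^ 2) / (2 * (c l - c (l - 1))))
    (hv : ∀ i, v i = (c i + c (i - 1)) / 2)
    (hz : z_r = (T ^ 2 - c r ^ 2) / (2 * (c (r + 1) - c r)))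
    -- the histogram density
    (f : ℝ → ℝ)
    (hf : ∀ j, 1 ≤ j → j ≤ m → ∀ x, c (j - 1) < x → x ≤ c j →
      f x = (q j - q (j - 1)) / (c j - c (j - 1)))
    -- the ogive: linear interpolant of the points (c j, q j)
    (L : ℝ → ℝ)
    (hL : ∀ j, 1 ≤ j → j ≤ m → ∀ x, c (j - 1) ≤ x → x ≤ c j →
      L x = ((c j - x) * q (j - 1) + (x - c (j - 1)) * q j) / (c j - c (j - 1)))
    (hLtT : L T - L t ≠ 0) :
    (∫ x in t..T, x * f x) / (L T - L t)
      = (uₗ * (q l - q (l - 1)) + (∑ i ∈ Finset.Icc (l + 1) r, v i * (q i - q (i - 1)))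
          + z_r * (q (r + 1) - q r))
        / (A₂ * q r + B₂ * q (r + 1) - A₁ * q (l - 1) - B₁ * q l) :=
  stmt2_general m c hcmono q l r hl hlr hrm t T ht1 ht2 hT1 hT2 A₁ B₁ A₂ B₂ uₗ z_r v hA₁ hB₁ hA₂ hB₂
    huₗ hv hz f hf L hL
end

section
/- With the group boundaries, truncation points, indices, constants, exponential cdf, and function g_tT as in the context, and assuming additionally t < c_l (so that A_1 > 0), the limit of g_tT(θ) as θ → 0+ (θ tending to 0 through positive values) equals u_l / A_1. -/
/-!
As `θ → 0⁺`, `exp(-x/θ)` vanishes faster for larger `x`, so after dividing by the dominant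
term `exp(-c_{l-1}/θ)` every relative weight `exp(-c_j/θ) / exp(-c_{l-1}/θ)` with `j ≥ l` tends
to `0`. Only the first group survives: `N*` is asymptotic to `uₗ exp(-c_{l-1}/θ)` and, because
`A₁ + B₁ = A₂ + B₂ = 1` cancels the constant terms, `H*` is asymptotic to `A₁ exp(-c_{l-1}/θ)`.
-/

open Filter Real Topology Finset

lemma tendsto_exp_neg_div_nhdsGT_zero {a : ℝ} (ha : 0 < a) :
    Tendsto (fun θ => exp (-a / θ)) (𝓝[>] 0) (𝓝 0) := by
  have h : Tendsto (fun θ : ℝ => -a * θ⁻¹) (𝓝[>] 0) atBot :=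
    tendsto_inv_nhdsGT_zero.const_mul_atTop_of_neg (neg_neg_of_pos ha)
  exact tendsto_exp_atBot.comp (h.congr fun θ => (div_eq_mul_inv _ _).symm)

lemma tendsto_exp_neg_div_div_exp_neg_div {a b : ℝ} (hab : a < b) :
    Tendsto (fun θ => exp (-b / θ) / exp (-a / θ)) (𝓝[>] 0) (𝓝 0) := by
  refine (tendsto_exp_neg_div_nhdsGT_zero (sub_pos.mpr hab)).congr fun θ => ?_
  rw [← exp_sub]
  ring_nf

lemma apply_lt_apply_of_forall_lt_succ {α : Type*} [Preorder α] {f : ℕ → α} {m : ℕ}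
    (hf : ∀ j, j < m → f j < f (j + 1)) {i j : ℕ} (hij : i < j) (hj : j ≤ m) : f i < f j :=
  strictMonoOn_Iic_of_lt_succ hf (Set.mem_Iic.mpr (by omega)) (Set.mem_Iic.mpr hj) hij

section GroupProbability

variable {c : ℕ → ℝ} {p Pr : ℕ → ℝ → ℝ}

lemma groupProb_eq (hp : ∀ j θ, p j θ = 1 - exp (-c j / θ))
    (hPr : ∀ j θ, Pr j θ = p j θ - p (j - 1) θ) (j : ℕ) (θ : ℝ) :
    Pr j θ = exp (-c (j - 1) / θ) - exp (-c j / θ) := by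
  rw [hPr, hp, hp]
  ring

lemma tendsto_groupProb_div_of_lt (hp : ∀ j θ, p j θ = 1 - exp (-c j / θ))
    (hPr : ∀ j θ, Pr j θ = p j θ - p (j - 1) θ) {a : ℝ} {j : ℕ}
    (hprev : a < c (j - 1)) (hj : a < c j) :
    Tendsto (fun θ => Pr j θ / exp (-a / θ)) (𝓝[>] 0) (𝓝 0) := by
  have h := (tendsto_exp_neg_div_div_exp_neg_div hprev).sub
    (tendsto_exp_neg_div_div_exp_neg_div hj)
  rw [sub_zero] at h
  exact h.congr fun θ => by rw [groupProb_eq hp hPr, sub_div]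

lemma tendsto_groupProb_div_self (hp : ∀ j θ, p j θ = 1 - exp (-c j / θ))
    (hPr : ∀ j θ, Pr j θ = p j θ - p (j - 1) θ) {j : ℕ} (hj : c (j - 1) < c j) :
    Tendsto (fun θ => Pr j θ / exp (-c (j - 1) / θ)) (𝓝[>] 0) (𝓝 1) := by
  have h := tendsto_const_nhds (x := (1 : ℝ)).sub (tendsto_exp_neg_div_div_exp_neg_div hj)
  rw [sub_zero] at h
  exact h.congr fun θ => by rw [groupProb_eq hp hPr, sub_div, div_self (exp_pos _).ne']

lemma tendsto_truncatedMean_div {m l r : ℕ} (hc : ∀ j, j < m → c j < c (j + 1))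
    (hp : ∀ j θ, p j θ = 1 - exp (-c j / θ)) (hPr : ∀ j θ, Pr j θ = p j θ - p (j - 1) θ)
    (hl : 1 ≤ l) (hlr : l ≤ r) (hrm : r + 1 ≤ m) (u z : ℝ) (v : ℕ → ℝ) :
    Tendsto (fun θ => (u * Pr l θ + (∑ i ∈ Icc (l + 1) r, v i * Pr i θ) + z * Pr (r + 1) θ)
      / exp (-c (l - 1) / θ)) (𝓝[>] 0) (𝓝 u) := by
  have hlt : ∀ {i j}, i < j → j ≤ m → c i < c j := apply_lt_apply_of_forall_lt_succ hc
  have hfirst :=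
    (tendsto_groupProb_div_self hp hPr (j := l) (hlt (by omega) (by omega))).const_mul u
  have hmiddle : Tendsto (fun θ => ∑ i ∈ Icc (l + 1) r, v i * (Pr i θ / exp (-c (l - 1) / θ)))
      (𝓝[>] 0) (𝓝 0) := by
    rw [← sum_const_zero (s := Icc (l + 1) r)]
    refine tendsto_finsetSum _ fun i hi => ?_
    rw [mem_Icc] at hi
    simpa using (tendsto_groupProb_div_of_lt hp hPr (hlt (by omega) (by omega))
      (hlt (by omega) (by omega))).const_mul (v i)
  have hlast := (tendsto_groupProb_div_of_lt hp hPr (a := c (l - 1)) (j := r + 1)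
    (hlt (by omega) (by omega)) (hlt (by omega) hrm)).const_mul z
  have h := (hfirst.add hmiddle).add hlast
  rw [mul_one, mul_zero, add_zero, add_zero] at h
  exact h.congr fun θ => by simp only [add_div, sum_div, mul_div_assoc]

end GroupProbability

lemma tendsto_cdf_combination_div {a x y z A₁ B₁ A₂ B₂ : ℝ} (hAB : A₁ + B₁ = A₂ + B₂)
    (hx : a < x) (hy : a < y) (hz : a < z) :
    Tendsto (fun θ => (A₂ * (1 - exp (-y / θ)) + B₂ * (1 - exp (-z / θ))
      - A₁ * (1 - exp (-a / θ)) - B₁ * (1 - exp (-x / θ))) / exp (-a / θ)) (𝓝[>] 0) (𝓝 A₁) := by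
  have h := (((tendsto_const_nhds (x := A₁)).add
    ((tendsto_exp_neg_div_div_exp_neg_div hx).const_mul B₁)).sub
    ((tendsto_exp_neg_div_div_exp_neg_div hy).const_mul A₂)).sub
    ((tendsto_exp_neg_div_div_exp_neg_div hz).const_mul B₂)
  rw [mul_zero, mul_zero, mul_zero, add_zero, sub_zero, sub_zero] at h
  refine h.congr fun θ => ?_
  field_simp
  linear_combination hAB

theorem stmt4_general
    (m : ℕ) (c : ℕ → ℝ)
    (hcmono : ∀ j, j < m → c j < c (j + 1))
    (l r : ℕ) (hl : 1 ≤ l) (hlr : l ≤ r) (hrm : r + 1 ≤ m)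
    (t T : ℝ)
    (A₁ B₁ A₂ B₂ uₗ z_r : ℝ) (v : ℕ → ℝ)
    (hA₁ : A₁ = (c l - t) / (c l - c (l - 1)))
    (hB₁ : B₁ = (t - c (l - 1)) / (c l - c (l - 1)))
    (hA₂ : A₂ = (c (r + 1) - T) / (c (r + 1) - c r))
    (hB₂ : B₂ = (T - c r) / (c (r + 1) - c r))
    -- the exponential cdf at the group boundaries and the group probabilities
    (p : ℕ → ℝ → ℝ) (hp : ∀ j θ, p j θ = 1 - Real.exp (-(c j) / θ))
    (Pr : ℕ → ℝ → ℝ) (hPr : ∀ j θ, Pr j θ = p j θ - p (j - 1) θ)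
    (Nstar Hstar g : ℝ → ℝ)
    (hN : ∀ θ, Nstar θ = uₗ * Pr l θ + (∑ i ∈ Finset.Icc (l + 1) r, v i * Pr i θ)
      + z_r * Pr (r + 1) θ)
    (hH : ∀ θ, Hstar θ = A₂ * p r θ + B₂ * p (r + 1) θ - A₁ * p (l - 1) θ - B₁ * p l θ)
    (hg : ∀ θ, g θ = Nstar θ / Hstar θ)
    (htl : t < c l) :
    Tendsto g (nhdsWithin 0 (Set.Ioi 0)) (nhds (uₗ / A₁)) := by
  have hlt : ∀ {i j}, i < j → j ≤ m → c i < c j := apply_lt_apply_of_forall_lt_succ hcmono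
  have hgap₁ : 0 < c l - c (l - 1) := sub_pos.mpr (hlt (by omega) (by omega))
  have hgap₂ : 0 < c (r + 1) - c r := sub_pos.mpr (hlt (by omega) hrm)
  have hA₁pos : 0 < A₁ := hA₁ ▸ div_pos (sub_pos.mpr htl) hgap₁
  have hsum₁ : A₁ + B₁ = 1 := by rw [hA₁, hB₁, ← add_div, div_eq_one_iff_eq hgap₁.ne']; ring
  have hsum₂ : A₂ + B₂ = 1 := by rw [hA₂, hB₂, ← add_div, div_eq_one_iff_eq hgap₂.ne']; ring
  have hNlim := tendsto_truncatedMean_div hcmono hp hPr hl hlr hrm uₗ z_r v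
  have hHlim := tendsto_cdf_combination_div (hsum₁.trans hsum₂.symm)
    (hlt (i := l - 1) (j := l) (by omega) (by omega))
    (hlt (i := l - 1) (j := r) (by omega) (by omega))
    (hlt (i := l - 1) (j := r + 1) (by omega) hrm)
  refine (hNlim.div hHlim hA₁pos.ne').congr fun θ => ?_
  rw [Pi.div_apply, div_div_div_cancel_right₀ (exp_pos _).ne', hg, hN, hH, hp, hp, hp, hp]

/-- Limiting value of `g_{tT}(θ)` as `θ → 0⁺`: it tends to `uₗ / A₁`. -/
theorem stmt4
    (m : ℕ) (c : ℕ → ℝ) (hc0 : c 0 = 0)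
    (hcmono : ∀ j, j < m → c j < c (j + 1))
    (l r : ℕ) (hl : 1 ≤ l) (hlr : l ≤ r) (hrm : r + 1 ≤ m)
    (t T : ℝ) (ht1 : c (l - 1) < t) (ht2 : t ≤ c l) (hT1 : c r < T) (hT2 : T ≤ c (r + 1))
    (A₁ B₁ A₂ B₂ uₗ z_r : ℝ) (v : ℕ → ℝ)
    (hA₁ : A₁ = (c l - t) / (c l - c (l - 1)))
    (hB₁ : B₁ = (t - c (l - 1)) / (c l - c (l - 1)))
    (hA₂ : A₂ = (c (r + 1) - T) / (c (r + 1) - c r))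
    (hB₂ : B₂ = (T - c r) / (c (r + 1) - c r))
    (huₗ : uₗ = (c l ^ 2 - t ^ 2) / (2 * (c l - c (l - 1))))
    (hv : ∀ i, v i = (c i + c (i - 1)) / 2)
    (hz : z_r = (T ^ 2 - c r ^ 2) / (2 * (c (r + 1) - c r)))
    -- the exponential cdf at the group boundaries and the group probabilities
    (p : ℕ → ℝ → ℝ) (hp : ∀ j θ, p j θ = 1 - Real.exp (-(c j) / θ))
    (Pr : ℕ → ℝ → ℝ) (hPr : ∀ j θ, Pr j θ = p j θ - p (j - 1) θ)
    (Nstar Hstar g : ℝ → ℝ)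
    (hN : ∀ θ, Nstar θ = uₗ * Pr l θ + (∑ i ∈ Finset.Icc (l + 1) r, v i * Pr i θ)
      + z_r * Pr (r + 1) θ)
    (hH : ∀ θ, Hstar θ = A₂ * p r θ + B₂ * p (r + 1) θ - A₁ * p (l - 1) θ - B₁ * p l θ)
    (hg : ∀ θ, g θ = Nstar θ / Hstar θ)
    (htl : t < c l) :
    Tendsto g (nhdsWithin 0 (Set.Ioi 0)) (nhds (uₗ / A₁)) :=
  stmt4_general m c hcmono l r hl hlr hrm t T A₁ B₁ A₂ B₂ uₗ z_r v hA₁ hB₁ hA₂ hB₂ p hp Pr hPr Nstar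
    Hstar g hN hH hg htl
end

section
/- With the group boundaries, truncation points, indices, constants, exponential cdf, and function g_tT as in the context, the limit of g_tT(θ) as θ → ∞ equals [u_l (c_{l-1} - c_l) + Σ_{i=l+1}^{r} v_i (c_{i-1} - c_i) + z_r (c_r - c_{r+1})] / [A_1 c_{l-1} + B_1 c_l - A_2 c_r - B_2 c_{r+1}] (the denominator is nonzero since A_1 c_{l-1} + B_1 c_l ≤ c_l ≤ c_r < A_2 c_r + B_2 c_{r+1}). -/
/-!
As `θ → ∞`, `θ (1 - e^{-x/θ}) → x`, so after multiplying numerator and denominator by `-θ`,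
`N*` and `H*` become linear combinations of boundary differences with the claimed limits.
The interpolation weights recombine `c_{l-1}, c_l` into `t` and `c_r, c_{r+1}` into `T`,
so the limit of the denominator is `t - T < 0`.
-/

open Filter Topology

lemma tendsto_mul_one_sub_exp_neg_div (a : ℝ) :
    Tendsto (fun θ : ℝ => θ * (1 - Real.exp (-a / θ))) atTop (𝓝 a) := by
  have hderiv : HasDerivAt (fun x : ℝ => 1 - Real.exp (-a * x)) a 0 := by
    simpa using (((hasDerivAt_id (0 : ℝ)).const_mul (-a)).exp).const_sub 1
  have hinv : Tendsto (fun θ : ℝ => θ⁻¹) atTop (𝓝[≠] 0) :=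
    tendsto_inv_atTop_nhdsGT_zero.mono_right (nhdsWithin_mono _ fun _ hx => ne_of_gt hx)
  -- `θ (1 - e^{-a/θ})` is the difference quotient of `x ↦ 1 - e^{-a x}` at `0` with step `θ⁻¹`.
  refine ((hasDerivAt_iff_tendsto_slope.mp hderiv).comp hinv).congr fun θ => ?_
  simp [slope_def_field, div_eq_mul_inv, mul_comm]

lemma tendsto_div_of_tendsto_mul_of_tendsto_mul {α : Type*} {l : Filter α} {s N H : α → ℝ}
    {n h : ℝ} (hs : ∀ᶠ x in l, s x ≠ 0) (hN : Tendsto (fun x => s x * N x) l (𝓝 n))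
    (hH : Tendsto (fun x => s x * H x) l (𝓝 h)) (h0 : h ≠ 0) :
    Tendsto (fun x => N x / H x) l (𝓝 (n / h)) :=
  (hN.div hH h0).congr' (hs.mono fun _ hx => mul_div_mul_left _ _ hx)

lemma sub_div_mul_add_sub_div_mul_eq {a b : ℝ} (hab : a ≠ b) (x : ℝ) :
    (b - x) / (b - a) * a + (x - a) / (b - a) * b = x := by
  field_simp [sub_ne_zero.mpr hab.symm]
  ring

theorem stmt5_general
    (m : ℕ) (c : ℕ → ℝ)
    (hcmono : ∀ j, j < m → c j < c (j + 1))
    (l r : ℕ) (hl : 1 ≤ l) (hlr : l ≤ r) (hrm : r + 1 ≤ m)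
    (t T : ℝ) (ht2 : t ≤ c l) (hT1 : c r < T)
    (A₁ B₁ A₂ B₂ uₗ z_r : ℝ) (v : ℕ → ℝ)
    (hA₁ : A₁ = (c l - t) / (c l - c (l - 1)))
    (hB₁ : B₁ = (t - c (l - 1)) / (c l - c (l - 1)))
    (hA₂ : A₂ = (c (r + 1) - T) / (c (r + 1) - c r))
    (hB₂ : B₂ = (T - c r) / (c (r + 1) - c r))
    -- the exponential cdf at the group boundaries and the group probabilities
    (p : ℕ → ℝ → ℝ) (hp : ∀ j θ, p j θ = 1 - Real.exp (-(c j) / θ))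
    (Pr : ℕ → ℝ → ℝ) (hPr : ∀ j θ, Pr j θ = p j θ - p (j - 1) θ)
    (Nstar Hstar g : ℝ → ℝ)
    (hN : ∀ θ, Nstar θ = uₗ * Pr l θ + (∑ i ∈ Finset.Icc (l + 1) r, v i * Pr i θ)
      + z_r * Pr (r + 1) θ)
    (hH : ∀ θ, Hstar θ = A₂ * p r θ + B₂ * p (r + 1) θ - A₁ * p (l - 1) θ - B₁ * p l θ)
    (hg : ∀ θ, g θ = Nstar θ / Hstar θ)
    :
    Tendsto g atTop (nhds
      ((uₗ * (c (l - 1) - c l) + (∑ i ∈ Finset.Icc (l + 1) r, v i * (c (i - 1) - c i))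
          + z_r * (c r - c (r + 1)))
        / (A₁ * c (l - 1) + B₁ * c l - A₂ * c r - B₂ * c (r + 1)))) := by
  have hc : StrictMonoOn c (Set.Iic m) :=
    strictMonoOn_Iic_of_lt_succ fun j hj => by simpa using hcmono j hj
  have hp_lim : ∀ j, Tendsto (fun θ => -θ * p j θ) atTop (𝓝 (-c j)) := fun j => by
    simpa only [hp, neg_mul] using (tendsto_mul_one_sub_exp_neg_div (c j)).neg
  have hPr_lim : ∀ j, Tendsto (fun θ => -θ * Pr j θ) atTop (𝓝 (c (j - 1) - c j)) := fun j => by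
    have h := (hp_lim j).sub (hp_lim (j - 1))
    rw [neg_sub_neg] at h
    exact h.congr fun θ => by rw [hPr]; ring
  have hN_lim : Tendsto (fun θ => -θ * Nstar θ) atTop (𝓝
      (uₗ * (c (l - 1) - c l) + (∑ i ∈ Finset.Icc (l + 1) r, v i * (c (i - 1) - c i))
        + z_r * (c r - c (r + 1)))) := by
    have h := (((hPr_lim l).const_mul uₗ).add
      (tendsto_finsetSum (Finset.Icc (l + 1) r) fun i _ => (hPr_lim i).const_mul (v i))).add
      ((hPr_lim (r + 1)).const_mul z_r)
    simp only [Nat.add_sub_cancel] at h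
    refine h.congr fun θ => ?_
    simp only [hN, mul_add, Finset.mul_sum, mul_left_comm]
  have hH_lim : Tendsto (fun θ => -θ * Hstar θ) atTop
      (𝓝 (A₁ * c (l - 1) + B₁ * c l - A₂ * c r - B₂ * c (r + 1))) := by
    have h := ((((hp_lim r).const_mul A₂).add ((hp_lim (r + 1)).const_mul B₂)).sub
      ((hp_lim (l - 1)).const_mul A₁)).sub ((hp_lim l).const_mul B₁)
    convert h.congr fun θ => ?_ using 2
    · ring
    · rw [hH]; ring
  have hlt : c (l - 1) < c l := hc (by simp; omega) (by simp; omega) (by omega)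
  have hrlt : c r < c (r + 1) := hcmono r (by omega)
  have hden : A₁ * c (l - 1) + B₁ * c l - A₂ * c r - B₂ * c (r + 1) = t - T := by
    rw [hA₁, hB₁, hA₂, hB₂, sub_sub, sub_div_mul_add_sub_div_mul_eq hlt.ne,
      sub_div_mul_add_sub_div_mul_eq hrlt.ne]
  have hden_ne : t - T ≠ 0 := by
    have : c l ≤ c r := hc.monotoneOn (by simp; omega) (by simp; omega) hlr
    linarith
  rw [funext hg]
  exact tendsto_div_of_tendsto_mul_of_tendsto_mul
    ((eventually_gt_atTop 0).mono fun _ hθ => neg_ne_zero.mpr hθ.ne') hN_lim hH_lim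
    (hden ▸ hden_ne)

/-- Limiting value of `g_{tT}(θ)` as `θ → ∞`. -/
theorem stmt5
    (m : ℕ) (c : ℕ → ℝ) (hc0 : c 0 = 0)
    (hcmono : ∀ j, j < m → c j < c (j + 1))
    (l r : ℕ) (hl : 1 ≤ l) (hlr : l ≤ r) (hrm : r + 1 ≤ m)
    (t T : ℝ) (ht1 : c (l - 1) < t) (ht2 : t ≤ c l) (hT1 : c r < T) (hT2 : T ≤ c (r + 1))
    (A₁ B₁ A₂ B₂ uₗ z_r : ℝ) (v : ℕ → ℝ)
    (hA₁ : A₁ = (c l - t) / (c l - c (l - 1)))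
    (hB₁ : B₁ = (t - c (l - 1)) / (c l - c (l - 1)))
    (hA₂ : A₂ = (c (r + 1) - T) / (c (r + 1) - c r))
    (hB₂ : B₂ = (T - c r) / (c (r + 1) - c r))
    (huₗ : uₗ = (c l ^ 2 - t ^ 2) / (2 * (c l - c (l - 1))))
    (hv : ∀ i, v i = (c i + c (i - 1)) / 2)
    (hz : z_r = (T ^ 2 - c r ^ 2) / (2 * (c (r + 1) - c r)))
    -- the exponential cdf at the group boundaries and the group probabilities
    (p : ℕ → ℝ → ℝ) (hp : ∀ j θ, p j θ = 1 - Real.exp (-(c j) / θ))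
    (Pr : ℕ → ℝ → ℝ) (hPr : ∀ j θ, Pr j θ = p j θ - p (j - 1) θ)
    (Nstar Hstar g : ℝ → ℝ)
    (hN : ∀ θ, Nstar θ = uₗ * Pr l θ + (∑ i ∈ Finset.Icc (l + 1) r, v i * Pr i θ)
      + z_r * Pr (r + 1) θ)
    (hH : ∀ θ, Hstar θ = A₂ * p r θ + B₂ * p (r + 1) θ - A₁ * p (l - 1) θ - B₁ * p l θ)
    (hg : ∀ θ, g θ = Nstar θ / Hstar θ)
    :
    Tendsto g atTop (nhds
      ((uₗ * (c (l - 1) - c l) + (∑ i ∈ Finset.Icc (l + 1) r, v i * (c (i - 1) - c i))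
          + z_r * (c r - c (r + 1)))
        / (A₁ * c (l - 1) + B₁ * c l - A₂ * c r - B₂ * c (r + 1)))) :=
  stmt5_general m c hcmono l r hl hlr hrm t T ht2 hT1 A₁ B₁ A₂ B₂ uₗ z_r v hA₁ hB₁ hA₂ hB₂ p hp Pr
    hPr Nstar Hstar g hN hH hg
end

section
/- With the group boundaries, truncation points, indices, constants, exponential cdf, N*, H*, and g_tT as in the context, define P(θ) = u_l (exp(-c_{l-1}/θ) - exp(-c_l/θ)) + Σ_{i=l+1}^{r} v_i (exp(-c_{i-1}/θ) - exp(-c_i/θ)) + z_r (exp(-c_r/θ) - exp(-c_{r+1}/θ)) and Q(θ) = B_2 (1 - exp(-c_{r+1}/θ)) - A_1 (1 - exp(-c_{l-1}/θ)) - B_1 (1 - exp(-c_l/θ)). Suppose T < c_{r+1} (so A_2 > 0), let θ > 0 and let μ̂ ≠ 0 be a real number with μ̂ · H*(θ) = N*(θ). Then exp(-c_r/θ) = (μ̂ A_2 - P(θ) + μ̂ Q(θ)) / (μ̂ A_2), this quantity lies strictly between 0 and 1, and consequently θ = -c_r / log((μ̂ A_2 - P(θ) + μ̂ Q(θ)) /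 (μ̂ A_2)). -/
/-!
Both sides of `μ̂ H*(θ) = N*(θ)` are affine in the survival probabilities `exp(-c_j/θ)`:
`N*(θ)` is `P(θ)` written with group probabilities, and `H*(θ) = A₂ (1 - exp(-c_r/θ)) + Q(θ)`.
The equation is therefore linear in `exp(-c_r/θ)`, whose coefficient `μ̂ A₂` is nonzero,
and solving for it gives the first claim. The boundaries are strictly increasing from
`c_0 = 0`, so `c_r > 0` and `exp(-c_r/θ) ∈ (0, 1)`; taking logarithms recovers `θ`.
-/

open Real

lemma exp_neg_div_mem_Ioo {x θ : ℝ} (hx : 0 < x) (hθ : 0 < θ) :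
    exp (-x / θ) ∈ Set.Ioo 0 1 :=
  ⟨exp_pos _, exp_lt_one_iff.mpr (div_neg_of_neg_of_pos (neg_neg_of_pos hx) hθ)⟩

lemma neg_div_log_exp_neg_div {x : ℝ} (hx : x ≠ 0) (θ : ℝ) : -x / log (exp (-x / θ)) = θ := by
  rw [log_exp, div_div_cancel₀ (neg_ne_zero.mpr hx)]

lemma eq_div_of_mul_affine_eq {μ A E Q P : ℝ} (hμA : μ * A ≠ 0)
    (h : μ * (A * (1 - E) + Q) = P) : E = (μ * A - P + μ * Q) / (μ * A) := by
  rw [eq_div_iff hμA]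
  linear_combination -h

theorem stmt8_general
    (m : ℕ) (c : ℕ → ℝ) (hc0 : c 0 = 0)
    (hcmono : ∀ j, j < m → c j < c (j + 1))
    (l r : ℕ) (hl : 1 ≤ l) (hlr : l ≤ r) (hrm : r + 1 ≤ m)
    (T : ℝ) (hT1 : c r < T)
    (A₁ B₁ A₂ B₂ uₗ z_r : ℝ) (v : ℕ → ℝ)
    (hA₂ : A₂ = (c (r + 1) - T) / (c (r + 1) - c r))
    -- the exponential cdf at the group boundaries and the group probabilities
    (p : ℕ → ℝ → ℝ) (hp : ∀ j θ, p j θ = 1 - Real.exp (-(c j) / θ))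
    (Pr : ℕ → ℝ → ℝ) (hPr : ∀ j θ, Pr j θ = p j θ - p (j - 1) θ)
    (Nstar Hstar : ℝ → ℝ)
    (hN : ∀ θ, Nstar θ = uₗ * Pr l θ + (∑ i ∈ Finset.Icc (l + 1) r, v i * Pr i θ)
      + z_r * Pr (r + 1) θ)
    (hH : ∀ θ, Hstar θ = A₂ * p r θ + B₂ * p (r + 1) θ - A₁ * p (l - 1) θ - B₁ * p l θ)
    (Pfun Q : ℝ → ℝ)
    (hPfun : ∀ θ, Pfun θ
      = uₗ * (Real.exp (-(c (l - 1)) / θ) - Real.exp (-(c l) / θ))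
        + (∑ i ∈ Finset.Icc (l + 1) r,
            v i * (Real.exp (-(c (i - 1)) / θ) - Real.exp (-(c i) / θ)))
        + z_r * (Real.exp (-(c r) / θ) - Real.exp (-(c (r + 1)) / θ)))
    (hQ : ∀ θ, Q θ = B₂ * (1 - Real.exp (-(c (r + 1)) / θ))
      - A₁ * (1 - Real.exp (-(c (l - 1)) / θ)) - B₁ * (1 - Real.exp (-(c l) / θ)))
    (hTc : T < c (r + 1))
    (θ : ℝ) (hθ : 0 < θ)
    (μHat : ℝ) (hμ : μHat ≠ 0) (heq : μHat * Hstar θ = Nstar θ) :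
    Real.exp (-(c r) / θ) = (μHat * A₂ - Pfun θ + μHat * Q θ) / (μHat * A₂)
    ∧ 0 < (μHat * A₂ - Pfun θ + μHat * Q θ) / (μHat * A₂)
    ∧ (μHat * A₂ - Pfun θ + μHat * Q θ) / (μHat * A₂) < 1
    ∧ θ = -(c r) / Real.log ((μHat * A₂ - Pfun θ + μHat * Q θ) / (μHat * A₂)) := by
  have hcr : 0 < c r := hc0 ▸ strictMonoOn_Iic_of_lt_succ hcmono
    (Set.mem_Iic.mpr (Nat.zero_le m)) (Set.mem_Iic.mpr (by omega)) (by omega)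
  have hA₂pos : 0 < A₂ := hA₂ ▸ div_pos (by linarith) (by linarith)
  have hPr_eq : ∀ j, Pr j θ = exp (-c (j - 1) / θ) - exp (-c j / θ) := fun j => by
    rw [hPr, hp, hp]; ring
  have hNP : Nstar θ = Pfun θ := by
    rw [hN, hPfun, hPr_eq, hPr_eq, Nat.add_sub_cancel,
      Finset.sum_congr rfl fun i _ => congrArg (v i * ·) (hPr_eq i)]
  have hHQ : Hstar θ = A₂ * (1 - exp (-c r / θ)) + Q θ := by
    rw [hH, hQ, hp, hp, hp, hp]; ring
  have hsolve := eq_div_of_mul_affine_eq (mul_ne_zero hμ hA₂pos.ne') (hHQ ▸ hNP ▸ heq)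
  obtain ⟨hpos, hlt⟩ := exp_neg_div_mem_Ioo hcr hθ
  refine ⟨hsolve, hsolve ▸ hpos, hsolve ▸ hlt, ?_⟩
  rw [← hsolve, neg_div_log_exp_neg_div hcr.ne']

/-- The fixed-point representation of the MTuM equation: if `T < c_{r+1}` (so `A₂ > 0`),
`θ > 0`, `μ̂ ≠ 0` and `μ̂ H*(θ) = N*(θ)`, then
`exp(-c_r/θ) = (μ̂A₂ - P(θ) + μ̂Q(θ))/(μ̂A₂)`, this quantity lies strictly in `(0,1)`,
and `θ = -c_r / log((μ̂A₂ - P(θ) + μ̂Q(θ))/(μ̂A₂))`. -/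
theorem stmt8
    (m : ℕ) (c : ℕ → ℝ) (hc0 : c 0 = 0)
    (hcmono : ∀ j, j < m → c j < c (j + 1))
    (l r : ℕ) (hl : 1 ≤ l) (hlr : l ≤ r) (hrm : r + 1 ≤ m)
    (t T : ℝ) (ht1 : c (l - 1) < t) (ht2 : t ≤ c l) (hT1 : c r < T) (hT2 : T ≤ c (r + 1))
    (A₁ B₁ A₂ B₂ uₗ z_r : ℝ) (v : ℕ → ℝ)
    (hA₁ : A₁ = (c l - t) / (c l - c (l - 1)))
    (hB₁ : B₁ = (t - c (l - 1)) / (c l - c (l - 1)))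
    (hA₂ : A₂ = (c (r + 1) - T) / (c (r + 1) - c r))
    (hB₂ : B₂ = (T - c r) / (c (r + 1) - c r))
    (huₗ : uₗ = (c l ^ 2 - t ^ 2) / (2 * (c l - c (l - 1))))
    (hv : ∀ i, v i = (c i + c (i - 1)) / 2)
    (hz : z_r = (T ^ 2 - c r ^ 2) / (2 * (c (r + 1) - c r)))
    -- the exponential cdf at the group boundaries and the group probabilities
    (p : ℕ → ℝ → ℝ) (hp : ∀ j θ, p j θ = 1 - Real.exp (-(c j) / θ))
    (Pr : ℕ → ℝ → ℝ) (hPr : ∀ j θ, Pr j θ = p j θ - p (j - 1) θ)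
    (Nstar Hstar g : ℝ → ℝ)
    (hN : ∀ θ, Nstar θ = uₗ * Pr l θ + (∑ i ∈ Finset.Icc (l + 1) r, v i * Pr i θ)
      + z_r * Pr (r + 1) θ)
    (hH : ∀ θ, Hstar θ = A₂ * p r θ + B₂ * p (r + 1) θ - A₁ * p (l - 1) θ - B₁ * p l θ)
    (hg : ∀ θ, g θ = Nstar θ / Hstar θ)
    (Pfun Q : ℝ → ℝ)
    (hPfun : ∀ θ, Pfun θ
      = uₗ * (Real.exp (-(c (l - 1)) / θ) - Real.exp (-(c l) / θ))
        + (∑ i ∈ Finset.Icc (l + 1) r,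
            v i * (Real.exp (-(c (i - 1)) / θ) - Real.exp (-(c i) / θ)))
        + z_r * (Real.exp (-(c r) / θ) - Real.exp (-(c (r + 1)) / θ)))
    (hQ : ∀ θ, Q θ = B₂ * (1 - Real.exp (-(c (r + 1)) / θ))
      - A₁ * (1 - Real.exp (-(c (l - 1)) / θ)) - B₁ * (1 - Real.exp (-(c l) / θ)))
    (hTc : T < c (r + 1))
    (θ : ℝ) (hθ : 0 < θ)
    (μHat : ℝ) (hμ : μHat ≠ 0) (heq : μHat * Hstar θ = Nstar θ) :
    Real.exp (-(c r) / θ) = (μHat * A₂ - Pfun θ + μHat * Q θ) / (μHat * A₂)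
    ∧ 0 < (μHat * A₂ - Pfun θ + μHat * Q θ) / (μHat * A₂)
    ∧ (μHat * A₂ - Pfun θ + μHat * Q θ) / (μHat * A₂) < 1
    ∧ θ = -(c r) / Real.log ((μHat * A₂ - Pfun θ + μHat * Q θ) / (μHat * A₂)) :=
  stmt8_general m c hc0 hcmono l r hl hlr hrm T hT1 A₁ B₁ A₂ B₂ uₗ z_r v hA₂ p hp Pr hPr Nstar Hstar
    hN hH Pfun Q hPfun hQ hTc θ hθ μHat hμ heq
end
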